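/- arXiv:2012.15094 — 5 statements merged into one kernel-verified Lean document; each statement's English description precedes it below -/
import Mathlib

section
/- Let n, k, d, r, δ be positive integers with (r+δ-1) dividing n, r ≥ 1, δ ≥ 2, and suppose d = n - k + 1 - (⌈k/r⌉ - 1)(δ - 1). Then n - k = (δ-1)·n/(r+δ-1) + d - δ - (δ-1)·⌊(d-δ)/(r+δ-1)⌋. -/
/-
Write `m = r + δ - 1`, `n = m q` and `a = ⌈k / r⌉`, so that `b = a r - k` lies in `[0, r)`.
Substituting the bound for `d` gives `d - δ = m (q - a) + b`, and `0 ≤ b < r ≤ m` makes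
`q - a` the floor of `(d - δ) / m`. Both sides of the claimed identity then reduce to
`d - δ + (δ - 1) a`.
-/

theorem Int.floor_intCast_div_intCast_of_nonneg (x m : ℤ) (hm : 0 ≤ m) :
    ⌊(x : ℚ) / m⌋ = x / m := by
  lift m to ℕ using hm
  exact_mod_cast Rat.floor_intCast_div_natCast x m

theorem Int.ceil_intCast_div_mul_sub_eq_neg_emod (k r : ℤ) (hr : 0 ≤ r) :
    ⌈(k : ℚ) / r⌉ * r - k = -k % r := by
  lift r to ℕ using hr
  rw [Int.cast_natCast, Rat.ceil_intCast_div_natCast, Int.emod_def]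
  ring

theorem stmt0_general (n k d r δ : ℤ)
    (hr : 1 ≤ r) (hδ : 2 ≤ δ) (hdiv : (r + δ - 1) ∣ n)
    (hbound : d = n - k + 1 - (⌈(k : ℚ) / (r : ℚ)⌉ - 1) * (δ - 1)) :
    n - k = (δ - 1) * (n / (r + δ - 1)) + d - δ
      - (δ - 1) * ⌊((d : ℚ) - δ) / ((r : ℚ) + δ - 1)⌋ := by
  obtain ⟨q, rfl⟩ := hdiv
  set a := ⌈(k : ℚ) / (r : ℚ)⌉
  have hm : 0 < r + δ - 1 := by omega
  have hb : a * r - k = -k % r := Int.ceil_intCast_div_mul_sub_eq_neg_emod k r (by omega)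
  have hb_nonneg : 0 ≤ -k % r := Int.emod_nonneg _ (by omega)
  have hb_lt : -k % r < r := Int.emod_lt_of_pos _ (by omega)
  have hdδ : -k % r + (r + δ - 1) * (q - a) = d - δ := by rw [hbound, ← hb]; ring
  have hfloor : ⌊((d : ℚ) - δ) / ((r : ℚ) + δ - 1)⌋ = q - a := by
    have hcast : ((d : ℚ) - δ) / ((r : ℚ) + δ - 1)
        = ((d - δ : ℤ) : ℚ) / ((r + δ - 1 : ℤ) : ℚ) := by
      push_cast; ring
    rw [hcast, Int.floor_intCast_div_intCast_of_nonneg _ _ hm.le]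
    exact ((Int.ediv_emod_unique hm).mpr ⟨hdδ, hb_nonneg, by omega⟩).1
  rw [hfloor, Int.mul_ediv_cancel_left _ hm.ne', hbound]
  ring

/-- Reformulation of the Singleton-type bound for (r,δ)-LRCs when (r+δ-1) ∣ n. -/
theorem stmt0 (n k d r δ : ℤ) (hn : 0 < n) (hk : 0 < k) (hd : 0 < d)
    (hr : 1 ≤ r) (hδ : 2 ≤ δ) (hdiv : (r + δ - 1) ∣ n)
    (hbound : d = n - k + 1 - (⌈(k : ℚ) / (r : ℚ)⌉ - 1) * (δ - 1)) :
    n - k = (δ - 1) * (n / (r + δ - 1)) + d - δ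
      - (δ - 1) * ⌊((d : ℚ) - δ) / ((r : ℚ) + δ - 1)⌋ :=
  stmt0_general n k d r δ hr hδ hdiv hbound
end

section
/- Let R ≥ 2, δ ≥ 2, μ ≥ 3 be integers. For real ε with 0 < ε ≤ (μR)^(−3R), and for every integer i with 2 ≤ i ≤ μ such that δ/2 + 1/(2(μ-2)) ≤ (⌊(i-1)·δ/2⌋+1)/(i-1), we have ε^i · C(iR - ⌊(i-1)δ/2⌋ - 1, R)^i · n^{(δ/2 + 1/(2(μ-2)))·i − ⌊(i-1)δ/2⌋ − 1} < ε·n^{δ/2 + 1/(2(μ-2))} / (μ^{3i-3}·(R!)^i) for all sufficiently large n. -/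
/-!
The exponent of `n` on the left is at most the one on the right, by the assumed inequality,
so it suffices to compare the constants, i.e. to show
`ε ^ (i - 1) · C ^ i · μ ^ (3i - 3) · R! ^ i < 1`.
Since `⌊(i - 1)δ/2⌋ ≥ i - 1`, the top of the binomial coefficient is at most `i(R - 1)`, so
`C · R! ≤ (i(R - 1)) ^ R`, and `ε ^ (i - 1) ≤ (μR) ^ (-3R(i - 1))` absorbs what is left.
-/

open Filter Nat

lemma Nat.choose_mul_factorial_le_pow (n k : ℕ) : n.choose k * k ! ≤ n ^ k := by
  rw [mul_comm, ← Nat.descFactorial_eq_factorial_mul_choose]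
  exact Nat.descFactorial_le_pow n k

lemma mul_sub_div_two_sub_one_le {i R δ : ℕ} (hδ : 2 ≤ δ) :
    i * R - (i - 1) * δ / 2 - 1 ≤ i * (R - 1) := by
  have hfloor : i - 1 ≤ (i - 1) * δ / 2 :=
    (Nat.le_div_iff_mul_le two_pos).2 (Nat.mul_le_mul_left _ hδ)
  have := Nat.mul_sub_one i R
  omega

lemma mul_pred_pow_mul_pow_lt {R i μ : ℕ} (hR : 2 ≤ R) (hi : 2 ≤ i) (hiμ : i ≤ μ) :
    (i * (R - 1)) ^ (R * i) * μ ^ (3 * (i - 1)) < (μ * R) ^ (3 * R * (i - 1)) := by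
  -- Only for `R = i = 2` does the exponent comparison `hexp` below fail.
  by_cases hc : R = 2 ∧ i = 2
  · obtain ⟨rfl, rfl⟩ := hc
    have : 1 ≤ μ ^ 3 := Nat.one_le_pow _ _ (by omega)
    have : μ ^ 3 ≤ μ ^ 6 := Nat.pow_le_pow_right (by omega) (by omega)
    norm_num [mul_pow]
    omega
  have hexp : R * i + 3 * (i - 1) ≤ 3 * R * (i - 1) := by
    obtain ⟨r, rfl⟩ := Nat.exists_eq_add_of_le' hR
    obtain ⟨j, rfl⟩ := Nat.exists_eq_add_of_le' hi
    have : 1 ≤ r + j := by omega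
    rw [show j + 2 - 1 = j + 1 by omega]
    nlinarith
  have hμ : 0 < μ := by omega
  have hR0 : 0 < R := by omega
  have hi0 : 0 < i := by omega
  calc (i * (R - 1)) ^ (R * i) * μ ^ (3 * (i - 1))
      < (μ * R) ^ (R * i) * (μ * R) ^ (3 * (i - 1)) := by
        refine Nat.mul_lt_mul_of_lt_of_le (Nat.pow_lt_pow_left ?_ (by positivity))
          (Nat.pow_le_pow_left (Nat.le_mul_of_pos_right _ (by omega)) _) (by positivity)
        calc i * (R - 1) ≤ μ * (R - 1) := Nat.mul_le_mul_right _ hiμ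
          _ < μ * R := Nat.mul_lt_mul_of_pos_left (by omega) (by omega)
    _ = (μ * R) ^ (R * i + 3 * (i - 1)) := (pow_add _ _ _).symm
    _ ≤ (μ * R) ^ (3 * R * (i - 1)) := Nat.pow_le_pow_right (by positivity) hexp

lemma choose_pow_mul_factorial_pow_mul_pow_lt {m R i μ : ℕ} (hm : m ≤ i * (R - 1))
    (hR : 2 ≤ R) (hi : 2 ≤ i) (hiμ : i ≤ μ) :
    m.choose R ^ i * R ! ^ i * μ ^ (3 * (i - 1)) < (μ * R) ^ (3 * R * (i - 1)) :=
  calc m.choose R ^ i * R ! ^ i * μ ^ (3 * (i - 1))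
      = (m.choose R * R !) ^ i * μ ^ (3 * (i - 1)) := by rw [mul_pow]
    _ ≤ ((i * (R - 1)) ^ R) ^ i * μ ^ (3 * (i - 1)) := by
        gcongr
        exact (Nat.choose_mul_factorial_le_pow m R).trans (Nat.pow_le_pow_left hm R)
    _ = (i * (R - 1)) ^ (R * i) * μ ^ (3 * (i - 1)) := by rw [← pow_mul]
    _ < (μ * R) ^ (3 * R * (i - 1)) := mul_pred_pow_mul_pow_lt hR hi hiμ

lemma pow_mul_lt_div_of_le_one_div_pow {ε x c d : ℝ} {k i : ℕ} (hi : 1 ≤ i) (hε0 : 0 < ε)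
    (hε : ε ≤ 1 / x ^ k) (hx : 0 < x) (hc : 0 ≤ c) (hd : 0 < d)
    (h : c * d < x ^ (k * (i - 1))) : ε ^ i * c < ε / d := by
  rw [lt_div_iff₀ hd]
  have hsmall : ε ^ (i - 1) * (c * d) < 1 :=
    calc ε ^ (i - 1) * (c * d) ≤ (1 / x ^ k) ^ (i - 1) * (c * d) := by gcongr
      _ = c * d / x ^ (k * (i - 1)) := by rw [div_pow, one_pow, ← pow_mul]; ring
      _ < 1 := (div_lt_one (by positivity)).2 h
  calc ε ^ i * c * d = ε * (ε ^ (i - 1) * (c * d)) := by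
        rw [← mul_pow_sub_one (by omega : i ≠ 0) ε]; ring
    _ < ε * 1 := mul_lt_mul_of_pos_left hsmall hε0
    _ = ε := mul_one ε

lemma mul_sub_sub_one_le_of_le_div {a f i : ℝ} (hi : 1 < i) (h : a ≤ (f + 1) / (i - 1)) :
    a * i - f - 1 ≤ a := by
  rw [le_div_iff₀ (by linarith)] at h
  linarith

lemma eventually_mul_rpow_lt_mul_rpow {c c' e a : ℝ} (hc : 0 ≤ c) (hcc' : c < c')
    (hea : e ≤ a) : ∀ᶠ n : ℕ in atTop, c * (n : ℝ) ^ e < c' * (n : ℝ) ^ a := by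
  filter_upwards [eventually_ge_atTop 1] with n hn
  have hn1 : (1 : ℝ) ≤ n := by exact_mod_cast hn
  calc c * (n : ℝ) ^ e ≤ c * (n : ℝ) ^ a :=
        mul_le_mul_of_nonneg_left (Real.rpow_le_rpow_of_exponent_le hn1 hea) hc
    _ < c' * (n : ℝ) ^ a := mul_lt_mul_of_pos_right hcc' (by positivity)

theorem stmt8_general (R δ μ : ℕ) (hR : 2 ≤ R) (hδ : 2 ≤ δ)
    (ε : ℝ) (hε0 : 0 < ε) (hε1 : ε ≤ 1 / ((μ * R : ℕ) : ℝ) ^ (3 * R)) :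
    ∀ i : ℕ, 2 ≤ i → i ≤ μ →
      (δ : ℝ) / 2 + 1 / (2 * ((μ : ℝ) - 2))
        ≤ (((((i - 1) * δ) / 2 : ℕ) : ℝ) + 1) / ((i : ℝ) - 1) →
      ∀ᶠ n : ℕ in atTop,
        ε ^ i * ((Nat.choose (i * R - ((i - 1) * δ) / 2 - 1) R : ℝ)) ^ i *
            (n : ℝ) ^ (((δ : ℝ) / 2 + 1 / (2 * ((μ : ℝ) - 2))) * i
              - ((((i - 1) * δ) / 2 : ℕ) : ℝ) - 1)
          < ε * (n : ℝ) ^ ((δ : ℝ) / 2 + 1 / (2 * ((μ : ℝ) - 2)))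
              / ((μ : ℝ) ^ (3 * i - 3) * (Nat.factorial R : ℝ) ^ i) := by
  intro i hi hiμ hexp
  have hμ : 0 < μ := by omega
  have hcount : ((i * R - (i - 1) * δ / 2 - 1).choose R : ℝ) ^ i
      * ((μ : ℝ) ^ (3 * (i - 1)) * (R ! : ℝ) ^ i)
      < ((μ * R : ℕ) : ℝ) ^ (3 * R * (i - 1)) := by
    rw [← mul_assoc, mul_right_comm]
    exact_mod_cast
      choose_pow_mul_factorial_pow_mul_pow_lt (mul_sub_div_two_sub_one_le hδ) hR hi hiμ
  have hconst := pow_mul_lt_div_of_le_one_div_pow (by omega) hε0 hε1 (by positivity)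
    (by positivity) (by positivity) hcount
  have hi1 : (1 : ℝ) < i := by exact_mod_cast hi
  rw [← Nat.mul_sub_one]
  filter_upwards [eventually_mul_rpow_lt_mul_rpow (by positivity) hconst
    (mul_sub_sub_one_le_of_le_div hi1 hexp)] with n hn
  rwa [div_mul_eq_mul_div] at hn

/-- The key expected-value inequality in the probabilistic deletion argument
(Claim 2 of the paper). -/
theorem stmt8 (R δ μ : ℕ) (hR : 2 ≤ R) (hδ : 2 ≤ δ) (hμ : 3 ≤ μ)
    (ε : ℝ) (hε0 : 0 < ε) (hε1 : ε ≤ 1 / ((μ * R : ℕ) : ℝ) ^ (3 * R)) :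
    ∀ i : ℕ, 2 ≤ i → i ≤ μ →
      (δ : ℝ) / 2 + 1 / (2 * ((μ : ℝ) - 2))
        ≤ (((((i - 1) * δ) / 2 : ℕ) : ℝ) + 1) / ((i : ℝ) - 1) →
      ∀ᶠ n : ℕ in atTop,
        ε ^ i * ((Nat.choose (i * R - ((i - 1) * δ) / 2 - 1) R : ℝ)) ^ i *
            (n : ℝ) ^ (((δ : ℝ) / 2 + 1 / (2 * ((μ : ℝ) - 2))) * i
              - ((((i - 1) * δ) / 2 : ℕ) : ℝ) - 1)
          < ε * (n : ℝ) ^ ((δ : ℝ) / 2 + 1 / (2 * ((μ : ℝ) - 2)))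
              / ((μ : ℝ) ^ (3 * i - 3) * (Nat.factorial R : ℝ) ^ i) :=
  stmt8_general R δ μ hR hδ ε hε0 hε1
end

section
/- Let q ≥ R = r + δ - 1 with δ ≥ 2, r ≥ 1, and let d satisfy δ+1 ≤ d ≤ 2δ. Let U be the (δ-1)×R Vandermonde matrix and V the (d-δ)×R matrix over F_q whose column generated by g ∈ G (|G| = R, G ⊆ F_q) is (1, g, …, g^{δ-2})ᵀ and (g^{δ-1}, …, g^{d-2})ᵀ respectively. Form the m(δ-1)+(d-δ) × mR matrix H with m copies of U in block-diagonal position and a bottom row of blocks (V, V, …, V). Then any d-1 columns of H are linearly independent. -/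
/-! Split the vanishing combination of columns into blocks (the copies of `U`). The `δ - 1`
rows of `U` over a block are Vandermonde rows, so every block with at most `δ - 1` chosen
columns carries zero coefficients. Two blocks with `δ` columns each would need `2δ > d - 1`
columns, so at most one block is larger; once all the others are zero, the rows of `V` only
see that block and extend its Vandermonde system to `d - 1` rows, enough for its at most
`d - 1` columns. -/

open Finset

section PowerSums

variable {R ι β : Type*} [CommRing R] [IsDomain R]

theorem Finset.eq_zero_of_forall_sum_mul_pow_eq_zero {s : Finset ι} {x a : ι → R}
    (hx : Set.InjOn x s) {N : ℕ} (hsN : #s ≤ N)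
    (h : ∀ k < N, ∑ i ∈ s, a i * x i ^ k = 0) : ∀ i ∈ s, a i = 0 := by
  let e : Fin #s ≃ s := s.equivFin.symm
  have hv : (fun j => a (e j)) = 0 := by
    refine Matrix.eq_zero_of_forall_pow_sum_mul_pow_eq_zero (f := fun j => x (e j)) ?_ ?_
    · exact fun j j' hjj' => e.injective (Subtype.ext (hx (e j).2 (e j').2 hjj'))
    · intro k
      rw [e.sum_comp (fun i : s => a i * x i ^ (k : ℕ))]
      exact (s.sum_coe_sort fun i => a i * x i ^ (k : ℕ)).trans (h k (by omega))
  intro i hi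
  simpa [e] using congrFun hv (e.symm ⟨i, hi⟩)

theorem Finset.eq_zero_of_blockwise_sum_mul_pow_eq_zero [DecidableEq β] {s : Finset ι}
    (b : ι → β) {x a : ι → R} (hx : ∀ j, Set.InjOn x ↑({i ∈ s | b i = j} : Finset ι))
    {n N : ℕ} (hsN : #s ≤ N) (hsn : #s ≤ 2 * n + 1)
    (hblock : ∀ j, ∀ k < n, ∑ i ∈ s with b i = j, a i * x i ^ k = 0)
    (htotal : ∀ k, n ≤ k → k < N → ∑ i ∈ s, a i * x i ^ k = 0) :
    ∀ i ∈ s, a i = 0 := by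
  have small : ∀ j, #{i ∈ s | b i = j} ≤ n → ∀ i ∈ s, b i = j → a i = 0 :=
    fun j hj i hi hij =>
      eq_zero_of_forall_sum_mul_pow_eq_zero (hx j) hj (hblock j) i (mem_filter.2 ⟨hi, hij⟩)
  intro i₀ hi₀
  by_cases hsmall : #{i ∈ s | b i = b i₀} ≤ n
  · exact small _ hsmall i₀ hi₀ rfl
  have others : ∀ i ∈ s, b i ≠ b i₀ → a i = 0 := by
    classical
    intro i hi hne
    refine small _ ?_ i hi rfl
    have hdisj : Disjoint {i' ∈ s | b i' = b i} {i' ∈ s | b i' = b i₀} :=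
      disjoint_filter.2 fun i' _ h h' => hne (h.symm.trans h')
    have : #{i' ∈ s | b i' = b i} + #{i' ∈ s | b i' = b i₀} ≤ #s := by
      rw [← card_union_of_disjoint hdisj]
      exact card_le_card (union_subset (filter_subset _ s) (filter_subset _ s))
    omega
  refine eq_zero_of_forall_sum_mul_pow_eq_zero (hx (b i₀))
    ((card_filter_le _ _).trans hsN) (fun k hk => ?_) i₀ (mem_filter.2 ⟨hi₀, rfl⟩)
  rcases lt_or_ge k n with hkn | hkn
  · exact hblock _ k hkn
  rw [sum_filter_of_ne fun i hi hai => by_contra fun hne => hai (by rw [others i hi hne, zero_mul])]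
  exact htotal k hkn hk

end PowerSums

theorem stmt13_general (F : Type*) [Field F] (r δ d m : ℕ)
    (hd2 : d ≤ 2 * δ)
    (g : Fin (r + δ - 1) → F) (hg : Function.Injective g)
    (T : Finset (Fin m × Fin (r + δ - 1))) (hT : T.card ≤ d - 1) :
    LinearIndependent F (fun c : T =>
      (Sum.elim
        (fun p : Fin m × Fin (δ - 1) =>
          if c.1.1 = p.1 then g c.1.2 ^ (p.2 : ℕ) else 0)
        (fun s : Fin (d - δ) => g c.1.2 ^ (δ - 1 + (s : ℕ)))
        : (Fin m × Fin (δ - 1)) ⊕ Fin (d - δ) → F)) := by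
  classical
  rw [Fintype.linearIndependent_iff]
  intro a ha c
  have hcard : #(univ : Finset T) = T.card := by simp
  refine eq_zero_of_blockwise_sum_mul_pow_eq_zero (fun c : T => c.1.1) (x := fun c => g c.1.2)
    (n := δ - 1) (N := d - 1) ?_ (by omega) (by omega) ?_ ?_ c (mem_univ c)
  · intro j c hc c' hc' hcc'
    simp only [coe_filter, mem_univ, true_and, Set.mem_ofPred_eq] at hc hc'
    exact Subtype.ext (Prod.ext (hc.trans hc'.symm) (hg hcc'))
  · intro j k hk
    simpa [sum_filter] using congrFun ha (Sum.inl (j, ⟨k, hk⟩))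
  · intro k hk hkd
    simpa [Nat.add_sub_cancel' hk] using congrFun ha (Sum.inr ⟨k - (δ - 1), by omega⟩)

/-- Theorem 1: with all generating sets equal (G₁ = … = G_m = G, |G| = r+δ-1)
and δ+1 ≤ d ≤ 2δ, any d-1 columns of the block parity-check matrix H (m
block-diagonal copies of the (δ-1)-row Vandermonde matrix U on top, a bottom
row of copies of the (d-δ)-row matrix V) are linearly independent. -/
theorem stmt13 (F : Type*) [Field F] [Fintype F] (r δ d m : ℕ)
    (hr : 1 ≤ r) (hδ : 2 ≤ δ) (hd1 : δ + 1 ≤ d) (hd2 : d ≤ 2 * δ)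
    (hq : r + δ - 1 ≤ Fintype.card F)
    (g : Fin (r + δ - 1) → F) (hg : Function.Injective g)
    (T : Finset (Fin m × Fin (r + δ - 1))) (hT : T.card ≤ d - 1) :
    LinearIndependent F (fun c : T =>
      (Sum.elim
        (fun p : Fin m × Fin (δ - 1) =>
          if c.1.1 = p.1 then g c.1.2 ^ (p.2 : ℕ) else 0)
        (fun s : Fin (d - δ) => g c.1.2 ^ (δ - 1 + (s : ℕ)))
        : (Fin m × Fin (δ - 1)) ⊕ Fin (d - δ) → F)) :=
  stmt13_general F r δ d m hd2 g hg T hT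
end

section
/- Let m₁, m₂, r₂, δ₂, d₂ be positive integers with δ₂ ≥ 2, δ₂ < d₂ < r₂ + δ₂, m₁ < r₂/(d₂-δ₂), and let r₁ satisfy r₁(1 − 1/m₁) < m₂r₂ − d₂ + δ₂ ≤ r₁. Set k = m₁(m₂r₂ − d₂ + δ₂) and n = m₁m₂(r₂+δ₂−1). Then ⌈k/r₂⌉ = m₁m₂, ⌈k/r₁⌉ = m₁, and n − k + 1 − (⌈k/r₂⌉−1)(δ₂−1) − (⌈k/r₁⌉−1)(d₂−δ₂) = d₂. -/
/-!
Write `k = m₁m₂r₂ - m₁(d₂ - δ₂)` with `0 < m₁(d₂ - δ₂) < r₂`, and `k = m₁s` with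
`s = m₂r₂ - d₂ + δ₂` and `(m₁ - 1)r₁ < m₁s ≤ m₁r₁`. Both ceilings are then read off from a
bracketing `(q - 1)b < a ≤ qb`, after which the Singleton-type identity is a ring identity.
-/

theorem Int.ceil_div_eq_of_lt_of_le {α : Type*} [Field α] [LinearOrder α] [IsStrictOrderedRing α]
    [FloorRing α] {a b : α} {q : ℤ} (hlt : (q - 1) * b < a) (hle : a ≤ q * b) :
    ⌈a / b⌉ = q := by
  have hb : 0 < b := by linarith
  rw [Int.ceil_eq_iff, lt_div_iff₀ hb, div_le_iff₀ hb]
  exact ⟨hlt, hle⟩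

theorem stmt17_general (m₁ m₂ r₂ δ₂ d₂ r₁ k n : ℤ)
    (hm₁ : 1 ≤ m₁)
    (hd1 : δ₂ < d₂)
    (hm : (m₁ : ℚ) < (r₂ : ℚ) / ((d₂ : ℚ) - δ₂))
    (hr1a : (r₁ : ℚ) * (1 - 1 / (m₁ : ℚ)) < (m₂ : ℚ) * r₂ - d₂ + δ₂)
    (hr1b : m₂ * r₂ - d₂ + δ₂ ≤ r₁)
    (hk : k = m₁ * (m₂ * r₂ - d₂ + δ₂)) (hn : n = m₁ * m₂ * (r₂ + δ₂ - 1)) :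
    ⌈(k : ℚ) / (r₂ : ℚ)⌉ = m₁ * m₂ ∧
    ⌈(k : ℚ) / (r₁ : ℚ)⌉ = m₁ ∧
    n - k + 1 - (⌈(k : ℚ) / (r₂ : ℚ)⌉ - 1) * (δ₂ - 1)
      - (⌈(k : ℚ) / (r₁ : ℚ)⌉ - 1) * (d₂ - δ₂) = d₂ := by
  have hm₁Q : (0 : ℚ) < m₁ := by exact_mod_cast hm₁.trans_lt' one_pos
  have hdδ : (0 : ℚ) < d₂ - δ₂ := sub_pos.mpr (by exact_mod_cast hd1)
  have hdefect : m₁ * (d₂ - δ₂) < r₂ := by exact_mod_cast (lt_div_iff₀ hdδ).mp hm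
  have hk_gt₂ : (m₁ * m₂ - 1) * r₂ < k := by rw [hk]; linarith
  have hk_le₂ : k ≤ m₁ * m₂ * r₂ := by rw [hk]; nlinarith
  have hk_gt₁ : (m₁ - 1) * r₁ < k := by
    have h := mul_lt_mul_of_pos_left hr1a hm₁Q
    rw [show (m₁ : ℚ) * (r₁ * (1 - 1 / m₁)) = (m₁ - 1) * r₁ by field_simp] at h
    rw [hk]; exact_mod_cast h
  have hk_le₁ : k ≤ m₁ * r₁ := hk ▸ mul_le_mul_of_nonneg_left hr1b (by omega)
  have hceil₂ : ⌈(k : ℚ) / r₂⌉ = m₁ * m₂ :=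
    Int.ceil_div_eq_of_lt_of_le (by exact_mod_cast hk_gt₂) (by exact_mod_cast hk_le₂)
  have hceil₁ : ⌈(k : ℚ) / r₁⌉ = m₁ :=
    Int.ceil_div_eq_of_lt_of_le (by exact_mod_cast hk_gt₁) (by exact_mod_cast hk_le₁)
  refine ⟨hceil₂, hceil₁, ?_⟩
  rw [hceil₂, hceil₁, hk, hn]
  ring

/-- Parameter verification in Theorem 9: the constructed hierarchical LRC
meets the Singleton-type bound for H-LRCs with δ₁ = d₂. -/
theorem stmt17 (m₁ m₂ r₂ δ₂ d₂ r₁ k n : ℤ)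
    (hm₁ : 1 ≤ m₁) (hm₂ : 1 ≤ m₂) (hr₁ : 1 ≤ r₁) (hr₂ : 1 ≤ r₂)
    (hδ : 2 ≤ δ₂) (hd1 : δ₂ < d₂) (hd2 : d₂ < r₂ + δ₂)
    (hm : (m₁ : ℚ) < (r₂ : ℚ) / ((d₂ : ℚ) - δ₂))
    (hr1a : (r₁ : ℚ) * (1 - 1 / (m₁ : ℚ)) < (m₂ : ℚ) * r₂ - d₂ + δ₂)
    (hr1b : m₂ * r₂ - d₂ + δ₂ ≤ r₁)
    (hk : k = m₁ * (m₂ * r₂ - d₂ + δ₂)) (hn : n = m₁ * m₂ * (r₂ + δ₂ - 1)) :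
    ⌈(k : ℚ) / (r₂ : ℚ)⌉ = m₁ * m₂ ∧
    ⌈(k : ℚ) / (r₁ : ℚ)⌉ = m₁ ∧
    n - k + 1 - (⌈(k : ℚ) / (r₂ : ℚ)⌉ - 1) * (δ₂ - 1)
      - (⌈(k : ℚ) / (r₁ : ℚ)⌉ - 1) * (d₂ - δ₂) = d₂ :=
  stmt17_general m₁ m₂ r₂ δ₂ d₂ r₁ k n hm₁ hd1 hm hr1a hr1b hk hn
end

section
/- Let h, δ, γ, s be nonnegative integers with δ ≥ 2, 1 ≤ h ≤ δ, and either (γ ≤ h and s = h+δ-1-2γ) or (h < γ < δ-1 and s = δ-1-γ). Let F₁,…,F_{l+2} be finite sets where F_i ⊆ G for i ≤ l+1 (|G| = r+δ-1) and F_{l+2} is a set of size at most min(γ,h) plus additional erasures, such that the total erasure pattern consists of γ full columns of an (l+2)×(r+δ-1) array and s additional entries. Then |∪_{i: |F_i| ≥ δ} F_i| + |F_{l+2}| ≤ h + δ - 1. -/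
open Finset

/-!
Outside the erased columns `Γ`, every element of a row is an additional erasure, so the union
of the heavily erased rows has at most `γ + S₁` elements and the last row at most `γ + S₂`,
where `S₁ + S₂ ≤ s`; the last row also has at most `h` elements. If `γ ≤ h` this gives
`2γ + s = h + δ - 1`, otherwise `γ + s + h = h + δ - 1`.
-/

theorem Finset.card_biUnion_le_card_add_sum_card_sdiff {ι α : Type*} [DecidableEq α]
    (s : Finset ι) (f : ι → Finset α) (Γ : Finset α) :
    #(s.biUnion f) ≤ #Γ + ∑ i ∈ s, #(f i \ Γ) :=
  calc #(s.biUnion f) ≤ #(s.biUnion f \ Γ) + #Γ := card_le_card_sdiff_add_card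
    _ ≤ #(s.biUnion fun i => f i \ Γ) + #Γ := by
        gcongr
        intro x
        simp only [mem_sdiff, mem_biUnion]
        tauto
    _ ≤ ∑ i ∈ s, #(f i \ Γ) + #Γ := by gcongr; exact card_biUnion_le
    _ = #Γ + ∑ i ∈ s, #(f i \ Γ) := add_comm _ _

theorem stmt18_general (l r δ h γ s : ℕ)
    (hcase : (γ ≤ h ∧ (s : ℤ) = (h : ℤ) + δ - 1 - 2 * γ) ∨
      (h < γ ∧ γ < δ - 1 ∧ (s : ℤ) = (δ : ℤ) - 1 - γ))
    (E : Fin (l + 1) → Finset (Fin (r + δ - 1)))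
    (Elast : Finset (Fin (r + δ - 1)))
    (hElast : Elast ⊆ univ.filter (fun a => (a : ℕ) < h))
    (hpattern : ∃ Γ : Finset (Fin (r + δ - 1)), Γ.card = γ ∧
      (∀ i, Γ ⊆ E i) ∧ (Γ.filter (fun a : Fin (r + δ - 1) => (a : ℕ) < h) ⊆ Elast) ∧
      (∑ i, ((E i) \ Γ).card) + (Elast \ Γ).card ≤ s) :
    ((univ.filter (fun i => δ ≤ (E i).card)).biUnion E).card + Elast.card
      ≤ h + δ - 1 := by
  obtain ⟨Γ, rfl, -, -, hextra⟩ := hpattern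
  have hrows : #((univ.filter fun i => δ ≤ #(E i)).biUnion E) ≤ #Γ + ∑ i, #(E i \ Γ) :=
    (card_biUnion_le_card_add_sum_card_sdiff _ E Γ).trans
      (by gcongr; exact subset_univ _)
  have hlast_cols : #Elast ≤ #(Elast \ Γ) + #Γ := card_le_card_sdiff_add_card
  have hlast_short : #Elast ≤ h :=
    (card_le_card hElast).trans (Fin.card_filter_val_lt.trans_le (min_le_right _ _))
  omega

/-- Counting step of Theorem 10 (GSD codes from Construction C): an erasure
pattern made of γ full columns of the (l+2)×(r+δ-1) array plus s extra sectors
satisfies |∪_{i : |E_i| ≥ δ} E_i| + |E_{l+2}| ≤ h + δ - 1. -/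
theorem stmt18 (l r δ h γ s : ℕ) (hr : 1 ≤ r) (hδ : 2 ≤ δ)
    (hh1 : 1 ≤ h) (hh2 : h ≤ δ)
    (hcase : (γ ≤ h ∧ (s : ℤ) = (h : ℤ) + δ - 1 - 2 * γ) ∨
      (h < γ ∧ γ < δ - 1 ∧ (s : ℤ) = (δ : ℤ) - 1 - γ))
    (E : Fin (l + 1) → Finset (Fin (r + δ - 1)))
    (Elast : Finset (Fin (r + δ - 1)))
    (hElast : Elast ⊆ univ.filter (fun a => (a : ℕ) < h))
    (hpattern : ∃ Γ : Finset (Fin (r + δ - 1)), Γ.card = γ ∧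
      (∀ i, Γ ⊆ E i) ∧ (Γ.filter (fun a : Fin (r + δ - 1) => (a : ℕ) < h) ⊆ Elast) ∧
      (∑ i, ((E i) \ Γ).card) + (Elast \ Γ).card ≤ s) :
    ((univ.filter (fun i => δ ≤ (E i).card)).biUnion E).card + Elast.card
      ≤ h + δ - 1 :=
  stmt18_general l r δ h γ s hcase E Elast hElast hpattern
end
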